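/- arXiv:2407.21582 — 5 statements merged into one kernel-verified Lean document; each statement's English description precedes it below -/
import Mathlib

section
/- Let A₁, A₂ ∈ M_n(ℂ) be nonzero. Then {B : A₁ ⊥ B} ⊆ {B : A₂ ⊥ B} if and only if M₀(A₁) ⊆ M₀(A₂) and there exists a nonzero α ∈ ℂ such that A₁u = α·A₂u for all u ∈ M₀(A₁). -/
/-!
The norm-attaining vectors `M₀(T)` of an operator on a finite-dimensional Hilbert space form a
subspace, on which `⟪T u, T z⟫ = ‖T‖² ⟪u, z⟫`. Birkhoff–James orthogonality `T ⊥ S` holds as soon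
as `⟪T u, S u⟫ = 0` for some unit `u ∈ M₀(T)`, and conversely, by compactness, `T ⊥ S` forces
`re ⟪T u, S u⟫ ≤ 0` for some such `u`.

If `‖A₂ + c B‖ < ‖A₂‖`, then `re ⟪A₂ u, c B u⟫ < 0` for all unit `u ∈ M₀(A₂) ⊇ M₀(A₁)`; as
`A₁ = α A₂` on `M₀(A₁)`, this says that `A₁` is not orthogonal to `-(c / ᾱ) B`. Conversely, fix a
unit `u ∈ M₀(A₁)` and test the inclusion `A₁^⊥ ⊆ A₂^⊥` on operators `B` with `B u ⊥ A₁ u`: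
`B = A₂ (1 - u u*)` shows `u ∈ M₀(A₂)`, and `B = w u* + c A₂ (1 - u u*)` with `w ⊥ A₁ u` and `c`
large shows `A₂ u ⊥ w`, so `A₂ u` is a multiple of `A₁ u`. Since `A₁` is injective on `M₀(A₁)`, a
linear map pointwise proportional to it there is a constant multiple of it.
-/

open scoped Matrix.Norms.L2Operator Matrix

/-- Action of a complex matrix on Euclidean space. -/
noncomputable def mulE {n : ℕ} (A : Matrix (Fin n) (Fin n) ℂ)
    (u : EuclideanSpace ℂ (Fin n)) : EuclideanSpace ℂ (Fin n) :=
  Matrix.toEuclideanCLM (𝕜 := ℂ) A u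

/-- The set of norm-attaining vectors of `A`. -/
noncomputable def M₀ {n : ℕ} (A : Matrix (Fin n) (Fin n) ℂ) :
    Set (EuclideanSpace ℂ (Fin n)) :=
  {u | ‖mulE A u‖ = ‖A‖ * ‖u‖}

/-- Birkhoff–James orthogonality in `M_n(ℂ)` with the operator norm. -/
noncomputable def BJ {n : ℕ} (A B : Matrix (Fin n) (Fin n) ℂ) : Prop :=
  ∀ c : ℂ, ‖A‖ ≤ ‖A + c • B‖

/-- The outgoing BJ neighborhood `A^⊥`. -/
noncomputable def orthSet {n : ℕ} (A : Matrix (Fin n) (Fin n) ℂ) :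
    Set (Matrix (Fin n) (Fin n) ℂ) :=
  {B | BJ A B}

open scoped InnerProductSpace ComplexConjugate
open RCLike Metric Filter Topology Set

theorem le_of_forall_pos_le_add_mul {a b c : ℝ} (h : ∀ t > 0, a ≤ b + t * c) : a ≤ b := by
  have hlim : Tendsto (fun t : ℝ ↦ b + t * c) (𝓝[>] 0) (𝓝 b) := by
    simpa using ((by fun_prop : Continuous fun t : ℝ ↦ b + t * c).tendsto 0).mono_left
      nhdsWithin_le_nhds
  exact ge_of_tendsto hlim (eventually_nhdsWithin_of_forall h)

theorem Submodule.forall_of_forall_norm_eq_one {𝕜 E : Type*} [RCLike 𝕜] [NormedAddCommGroup E]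
    [NormedSpace 𝕜 E] (p : Submodule 𝕜 E) {P : E → Prop} (h0 : P 0)
    (hsmul : ∀ (c : 𝕜) (u : E), P u → P (c • u)) (h : ∀ u ∈ p, ‖u‖ = 1 → P u) :
    ∀ u ∈ p, P u := by
  intro u hu
  rcases eq_or_ne u 0 with rfl | hu0
  · exact h0
  have hnorm : (‖u‖ : 𝕜) ≠ 0 := RCLike.ofReal_ne_zero.2 (norm_ne_zero_iff.2 hu0)
  simpa [smul_smul, mul_inv_cancel₀ hnorm] using
    hsmul (‖u‖ : 𝕜) _ (h _ (p.smul_mem (‖u‖⁻¹ : 𝕜) hu) (norm_smul_inv_norm hu0))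

theorem LinearMap.exists_eq_smul_of_forall_mem_span_singleton {K V W : Type*} [Field K]
    [AddCommGroup V] [Module K V] [AddCommGroup W] [Module K W] {f g : V →ₗ[K] W}
    (hf : Function.Injective f) (h : ∀ v, g v ∈ K ∙ f v) : ∃ a : K, g = a • f := by
  have hg : ∀ v, g v ∈ LinearMap.range f := fun v ↦
    (Submodule.span_singleton_le_iff_mem _ _).2 (LinearMap.mem_range_self f v) (h v)
  let e := LinearEquiv.ofInjective f hf
  let φ : V →ₗ[K] V := e.symm.toLinearMap ∘ₗ g.codRestrict (LinearMap.range f) hg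
  have he : ∀ v, (e (φ v) : W) = g v := fun v ↦ by simp [φ]
  have hef : ∀ v, (e v : W) = f v := fun _ ↦ rfl
  obtain ⟨a, ha⟩ := φ.exists_eq_smul_id_of_forall_notLinearIndependent fun v ↦ by
    obtain ⟨b, hb⟩ := Submodule.mem_span_singleton.1 (h v)
    have hφ : φ v = b • v :=
      e.injective (Subtype.ext (by simp [he, hef, hb]))
    exact fun hli ↦ by simpa using (LinearIndependent.pair_iff.1 hli b (-1) (by simp [hφ])).2
  refine ⟨a, LinearMap.ext fun v ↦ ?_⟩
  rw [← he, ha]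
  simp [hef]

def BirkhoffJamesOrthogonal (𝕜 : Type*) {X : Type*} [SeminormedAddCommGroup X] [SMul 𝕜 X]
    (x y : X) : Prop :=
  ∀ c : 𝕜, ‖x‖ ≤ ‖x + c • y‖

theorem BirkhoffJamesOrthogonal.smul_right {𝕜 X : Type*} [Monoid 𝕜] [SeminormedAddCommGroup X]
    [MulAction 𝕜 X] {x y : X} (h : BirkhoffJamesOrthogonal 𝕜 x y) (μ : 𝕜) :
    BirkhoffJamesOrthogonal 𝕜 x (μ • y) :=
  fun c ↦ by simpa [smul_smul] using h (c * μ)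

section InnerProductSpace

variable {𝕜 E F : Type*} [RCLike 𝕜] [NormedAddCommGroup E] [InnerProductSpace 𝕜 E]
  [NormedAddCommGroup F] [InnerProductSpace 𝕜 F]

theorem norm_le_norm_add_of_re_inner_nonneg {x y : F} (h : 0 ≤ re ⟪x, y⟫_𝕜) : ‖x‖ ≤ ‖x + y‖ := by
  refine (pow_le_pow_iff_left₀ (norm_nonneg _) (norm_nonneg _) two_ne_zero).1 ?_
  rw [norm_add_sq (𝕜 := 𝕜)]
  nlinarith [norm_nonneg y]

namespace ContinuousLinearMap

/-- `u` minimizes the nonnegative quadratic form `‖T‖² ‖z‖² - ‖T z‖²`, so the linear term of its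
expansion at `u` vanishes. -/
theorem re_inner_map_map_of_norm_map_eq {T : E →L[𝕜] F} {u : E} (hu : ‖T u‖ = ‖T‖ * ‖u‖)
    (z : E) : re ⟪T u, T z⟫_𝕜 = ‖T‖ ^ 2 * re ⟪u, z⟫_𝕜 := by
  have hquad : ∀ t : ℝ, 0 ≤ (‖T‖ ^ 2 * ‖z‖ ^ 2 - ‖T z‖ ^ 2) * (t * t)
      + 2 * (‖T‖ ^ 2 * re ⟪u, z⟫_𝕜 - re ⟪T u, T z⟫_𝕜) * t + 0 := by
    intro t
    have hle : ‖T (u + (t : 𝕜) • z)‖ ^ 2 ≤ (‖T‖ * ‖u + (t : 𝕜) • z‖) ^ 2 :=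
      pow_le_pow_left₀ (norm_nonneg _) (T.le_opNorm _) 2
    rw [map_add, map_smul, mul_pow, norm_add_sq (𝕜 := 𝕜), norm_add_sq (𝕜 := 𝕜), hu] at hle
    simp only [inner_smul_right, re_ofReal_mul, norm_smul, norm_ofReal, mul_pow, sq_abs] at hle
    nlinarith
  have := discrim_le_zero hquad
  rw [discrim] at this
  nlinarith [sq_nonneg (‖T‖ ^ 2 * re ⟪u, z⟫_𝕜 - re ⟪T u, T z⟫_𝕜)]

theorem inner_map_map_of_norm_map_eq {T : E →L[𝕜] F} {u : E} (hu : ‖T u‖ = ‖T‖ * ‖u‖)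
    (z : E) : ⟪T u, T z⟫_𝕜 = ((‖T‖ ^ 2 : ℝ) : 𝕜) * ⟪u, z⟫_𝕜 := by
  set g : E → 𝕜 := fun z ↦ ⟪T u, T z⟫_𝕜 - ((‖T‖ ^ 2 : ℝ) : 𝕜) * ⟪u, z⟫_𝕜 with hg
  have hre : ∀ z, re (g z) = 0 := fun z ↦ by
    simp [hg, re_inner_map_map_of_norm_map_eq hu z]
  have hsmul : g (conj (g z) • z) = conj (g z) * g z := by
    simp only [hg, map_smul, inner_smul_right]; ring
  have h0 : ‖g z‖ ^ 2 = 0 := by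
    have := hre (conj (g z) • z)
    rwa [hsmul, RCLike.conj_mul, ← ofReal_pow, ofReal_re] at this
  exact sub_eq_zero.mp (norm_eq_zero.mp (pow_eq_zero_iff two_ne_zero |>.mp h0))

def normAttainSubspace (T : E →L[𝕜] F) : Submodule 𝕜 E where
  carrier := {u | ‖T u‖ = ‖T‖ * ‖u‖}
  zero_mem' := by simp
  add_mem' {u v} hu hv := by
    have key : ‖T (u + v)‖ ^ 2 = (‖T‖ * ‖u + v‖) ^ 2 := by
      rw [map_add, mul_pow, norm_add_sq (𝕜 := 𝕜), norm_add_sq (𝕜 := 𝕜),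
        inner_map_map_of_norm_map_eq hu, re_ofReal_mul, hu, hv]
      ring
    exact (sq_eq_sq₀ (norm_nonneg _) (by positivity)).1 key
  smul_mem' c u hu := by
    change ‖T u‖ = ‖T‖ * ‖u‖ at hu
    change ‖T (c • u)‖ = ‖T‖ * ‖c • u‖
    rw [map_smul, norm_smul, norm_smul, hu, mul_left_comm]

theorem mem_normAttainSubspace {T : E →L[𝕜] F} {u : E} :
    u ∈ T.normAttainSubspace ↔ ‖T u‖ = ‖T‖ * ‖u‖ :=
  Iff.rfl

theorem norm_le_norm_add_of_re_inner_map_nonneg {T S : E →L[𝕜] F} {u : E}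
    (hu : u ∈ T.normAttainSubspace) (hu1 : ‖u‖ = 1) (h : 0 ≤ re ⟪T u, S u⟫_𝕜) :
    ‖T‖ ≤ ‖T + S‖ :=
  calc ‖T‖ = ‖T u‖ := by rw [mem_normAttainSubspace.1 hu, hu1, mul_one]
    _ ≤ ‖T u + S u‖ := norm_le_norm_add_of_re_inner_nonneg h
    _ ≤ ‖T + S‖ := by simpa [hu1] using (T + S).le_opNorm u

theorem birkhoffJamesOrthogonal_of_inner_map_eq_zero {T S : E →L[𝕜] F} {u : E}
    (hu : u ∈ T.normAttainSubspace) (hu1 : ‖u‖ = 1) (h : ⟪T u, S u⟫_𝕜 = 0) :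
    BirkhoffJamesOrthogonal 𝕜 T S :=
  fun c ↦ norm_le_norm_add_of_re_inner_map_nonneg hu hu1 (by simp [inner_smul_right, h])

theorem re_inner_map_sub_smulRight_pos {T : E →L[𝕜] F} {u x : E} (hu1 : ‖u‖ = 1)
    (hTu : ‖T u‖ < ‖T‖) (hx : x ∈ T.normAttainSubspace) (hx1 : ‖x‖ = 1) :
    0 < re ⟪T x, (T - (innerSL 𝕜 u).smulRight (T u)) x⟫_𝕜 := by
  have hTx : ‖T x‖ = ‖T‖ := by rw [mem_normAttainSubspace.1 hx, hx1, mul_one]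
  have hcross : ‖⟪u, x⟫_𝕜 * ⟪T x, T u⟫_𝕜‖ ≤ ‖T‖ * ‖T u‖ :=
    calc ‖⟪u, x⟫_𝕜 * ⟪T x, T u⟫_𝕜‖ ≤ (‖u‖ * ‖x‖) * (‖T x‖ * ‖T u‖) := by
          rw [norm_mul]; gcongr <;> exact norm_inner_le_norm _ _
      _ = ‖T‖ * ‖T u‖ := by rw [hu1, hx1, hTx, one_mul, one_mul]
  have hre : re ⟪T x, (T - (innerSL 𝕜 u).smulRight (T u)) x⟫_𝕜
      = ‖T‖ ^ 2 - re (⟪u, x⟫_𝕜 * ⟪T x, T u⟫_𝕜) := by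
    simp [inner_sub_right, inner_smul_right, hTx]
  rw [hre]
  nlinarith [(re_le_norm _).trans hcross, norm_nonneg (T u)]

theorem inner_map_sub_inner_smul_eq_zero {T : E →L[𝕜] F} {u : E} (hu : u ∈ T.normAttainSubspace)
    (hu1 : ‖u‖ = 1) (x : E) : ⟪T u, T x - ⟪u, x⟫_𝕜 • T u⟫_𝕜 = 0 := by
  rw [inner_sub_right, inner_smul_right, inner_map_map_of_norm_map_eq hu,
    inner_map_map_of_norm_map_eq hu, inner_self_eq_norm_sq_to_K, hu1]
  push_cast
  ring

/-- With `τ = ⟪u, x⟫` and `z = T x - τ T u`, the real part below is `|τ|² + re (τ ⟪z, w⟫) + c ‖z‖²`;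
the weight `c = 1 + ‖w‖²` makes it positive unless `τ = 0` and `z = 0`, i.e. `T x = 0`. -/
theorem re_inner_map_smulRight_add_pos {T : E →L[𝕜] F} {u x : E} {w : F}
    (hu : u ∈ T.normAttainSubspace) (hu1 : ‖u‖ = 1) (hw : ⟪T u, w⟫_𝕜 = 1)
    (hx : x ∈ T.normAttainSubspace) (hx1 : ‖x‖ = 1) :
    0 < re ⟪T x, ((innerSL 𝕜 u).smulRight w +
      ((1 + ‖w‖ ^ 2 : ℝ) : 𝕜) • (T - (innerSL 𝕜 u).smulRight (T u))) x⟫_𝕜 := by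
  set τ := ⟪u, x⟫_𝕜
  set z := T x - τ • T u with hz_def
  have hTu : ‖T u‖ = ‖T‖ := by rw [mem_normAttainSubspace.1 hu, hu1, mul_one]
  have hTx : ‖T x‖ = ‖T‖ := by rw [mem_normAttainSubspace.1 hx, hx1, mul_one]
  have hTpos : 0 < ‖T‖ := by
    rw [← hTu, norm_pos_iff]
    rintro h0
    simp [h0] at hw
  have hz : ⟪T u, z⟫_𝕜 = 0 := inner_map_sub_inner_smul_eq_zero hu hu1 x
  have hdecomp : T x = τ • T u + z := by rw [hz_def]; abel
  have hval : ⟪T x, ((innerSL 𝕜 u).smulRight w +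
      ((1 + ‖w‖ ^ 2 : ℝ) : 𝕜) • (T - (innerSL 𝕜 u).smulRight (T u))) x⟫_𝕜
      = conj τ * τ + τ * ⟪z, w⟫_𝕜 + ((1 + ‖w‖ ^ 2 : ℝ) : 𝕜) * ((‖z‖ ^ 2 : ℝ) : 𝕜) := by
    have hBx : ((innerSL 𝕜 u).smulRight w +
        ((1 + ‖w‖ ^ 2 : ℝ) : 𝕜) • (T - (innerSL 𝕜 u).smulRight (T u))) x
        = τ • w + ((1 + ‖w‖ ^ 2 : ℝ) : 𝕜) • z := by
      simp [hz_def, τ]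
    rw [hBx, hdecomp]
    simp only [inner_add_left, inner_add_right, inner_smul_left, inner_smul_right, hw, hz,
      inner_self_eq_norm_sq_to_K]
    push_cast
    ring
  have hpyth : ‖T‖ ^ 2 = ‖τ‖ ^ 2 * ‖T‖ ^ 2 + ‖z‖ ^ 2 := by
    have := norm_add_sq (𝕜 := 𝕜) (τ • T u) z
    rwa [← hdecomp, hTx, inner_smul_left, hz, mul_zero, map_zero, mul_zero, add_zero, norm_smul,
      hTu, mul_pow] at this
  have hcross : ‖τ * ⟪z, w⟫_𝕜‖ ≤ ‖τ‖ * (‖z‖ * ‖w‖) := by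
    rw [norm_mul]; gcongr; exact norm_inner_le_norm _ _
  rw [hval, map_add, map_add, RCLike.conj_mul, ← ofReal_mul, ofReal_re]
  simp only [← ofReal_pow, ofReal_re]
  have hre := neg_le_of_abs_le ((abs_re_le_norm _).trans hcross)
  rcases (norm_nonneg z).eq_or_lt with hz0 | hzpos
  · rw [← hz0] at hpyth hre ⊢
    nlinarith
  · nlinarith [sq_nonneg (‖τ‖ - ‖z‖ * ‖w‖ / 2), sq_nonneg (‖z‖ * ‖w‖), mul_pos hzpos hzpos]

variable [FiniteDimensional 𝕜 E]

theorem exists_norm_eq_one_norm_map_eq_opNorm [Nontrivial E]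
    (T : E →L[𝕜] F) : ∃ u : E, ‖u‖ = 1 ∧ ‖T u‖ = ‖T‖ := by
  have : ProperSpace E := FiniteDimensional.proper_rclike 𝕜 E
  have : NormedSpace ℝ E := .restrictScalars ℝ 𝕜 E
  have hK : IsCompact ((fun x ↦ ‖T x‖) '' sphere 0 1) :=
    (isCompact_sphere 0 1).image (by fun_prop)
  obtain ⟨u, hu, h⟩ := hK.sSup_mem ((NormedSpace.sphere_nonempty.2 zero_le_one).image _)
  exact ⟨u, mem_sphere_zero_iff_norm.1 hu, h.trans T.sSup_sphere_eq_norm⟩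

theorem _root_.BirkhoffJamesOrthogonal.exists_almost_norming_re_inner_map_le [Nontrivial E]
    {T S : E →L[𝕜] F} (h : BirkhoffJamesOrthogonal 𝕜 T S) {t : ℝ} (ht : 0 < t) :
    ∃ v : E, ‖v‖ = 1 ∧ ‖T‖ ≤ ‖T v‖ + t * ‖S‖ ∧ 2 * re ⟪T v, S v⟫_𝕜 ≤ t * ‖S‖ ^ 2 := by
  obtain ⟨v, hv1, hv⟩ := (T + (-(t : 𝕜)) • S).exists_norm_eq_one_norm_map_eq_opNorm
  have happly : (T + (-(t : 𝕜)) • S) v = T v - (t : 𝕜) • S v := by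
    simp [sub_eq_add_neg]
  have hT : ‖T v‖ ≤ ‖T‖ := by simpa [hv1] using T.le_opNorm v
  have hS : ‖S v‖ ≤ ‖S‖ := by simpa [hv1] using S.le_opNorm v
  have hBJ : ‖T‖ ≤ ‖T v - (t : 𝕜) • S v‖ := (h _).trans (by rw [← hv, happly])
  refine ⟨v, hv1, ?_, ?_⟩
  · calc ‖T‖ ≤ ‖T v - (t : 𝕜) • S v‖ := hBJ
      _ ≤ ‖T v‖ + ‖(t : 𝕜) • S v‖ := norm_sub_le _ _
      _ ≤ ‖T v‖ + t * ‖S‖ := by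
        rw [norm_smul, norm_ofReal, abs_of_pos ht]; gcongr
  · have hsq := pow_le_pow_left₀ (norm_nonneg _) hBJ 2
    rw [norm_sub_sq (𝕜 := 𝕜), inner_smul_right, re_ofReal_mul, norm_smul, norm_ofReal,
      abs_of_pos ht] at hsq
    have hS2 : ‖S v‖ ^ 2 ≤ ‖S‖ ^ 2 := pow_le_pow_left₀ (norm_nonneg _) hS 2
    have hT2 : ‖T v‖ ^ 2 ≤ ‖T‖ ^ 2 := pow_le_pow_left₀ (norm_nonneg _) hT 2
    have : t * (2 * re ⟪T v, S v⟫_𝕜) ≤ t * (t * ‖S‖ ^ 2) := by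
      nlinarith [mul_le_mul_of_nonneg_left hS2 (sq_nonneg t)]
    exact le_of_mul_le_mul_left this ht

/-- A weak form of the Bhatia–Šemrl theorem: take a common point of the nested compact sets of
unit vectors described in `exists_almost_norming_re_inner_map_le`, over all `t > 0`. -/
theorem _root_.BirkhoffJamesOrthogonal.exists_re_inner_map_nonpos [Nontrivial E] {T S : E →L[𝕜] F}
    (h : BirkhoffJamesOrthogonal 𝕜 T S) :
    ∃ u ∈ T.normAttainSubspace, ‖u‖ = 1 ∧ re ⟪T u, S u⟫_𝕜 ≤ 0 := by
  have : ProperSpace E := FiniteDimensional.proper_rclike 𝕜 E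
  let K : Ioi (0 : ℝ) → Set E := fun t ↦
    sphere 0 1 ∩ ({v | ‖T‖ ≤ ‖T v‖ + t * ‖S‖} ∩ {v | 2 * re ⟪T v, S v⟫_𝕜 ≤ t * ‖S‖ ^ 2})
  have hmono : Monotone K := by
    rintro t t' (htt' : (t : ℝ) ≤ t') v ⟨hv, h₁, h₂⟩
    refine ⟨hv, (?_ : ‖T‖ ≤ ‖T v‖ + t' * ‖S‖), (?_ : 2 * re ⟪T v, S v⟫_𝕜 ≤ t' * ‖S‖ ^ 2)⟩
    · exact h₁.trans (by gcongr)
    · exact h₂.trans (by gcongr)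
  have hclosed : ∀ t, IsClosed (K t) := fun t ↦ by
    apply isClosed_sphere.inter ((isClosed_le ?_ ?_).inter (isClosed_le ?_ ?_)) <;> fun_prop
  have hne : ∀ t, (K t).Nonempty := fun ⟨t, ht⟩ ↦ by
    obtain ⟨v, hv1, hv⟩ := h.exists_almost_norming_re_inner_map_le ht
    exact ⟨v, mem_sphere_zero_iff_norm.2 hv1, hv⟩
  have : Nonempty (Ioi (0 : ℝ)) := ⟨⟨1, mem_Ioi.2 one_pos⟩⟩
  obtain ⟨u, hu⟩ := IsCompact.nonempty_iInter_of_directed_nonempty_isCompact_isClosed K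
    hmono.directed_ge hne
    (fun t ↦ (isCompact_sphere 0 1).of_isClosed_subset (hclosed t) inter_subset_left) hclosed
  rw [mem_iInter] at hu
  have hu1 : ‖u‖ = 1 := mem_sphere_zero_iff_norm.1 (hu ⟨1, mem_Ioi.2 one_pos⟩).1
  refine ⟨u, ?_, hu1, ?_⟩
  · refine mem_normAttainSubspace.2 (le_antisymm ?_ ?_)
    · exact T.le_opNorm u
    · rw [hu1, mul_one]
      exact le_of_forall_pos_le_add_mul fun t ht ↦ (hu ⟨t, ht⟩).2.1
  · have := le_of_forall_pos_le_add_mul fun t ht ↦ by rw [zero_add]; exact (hu ⟨t, ht⟩).2.2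
    linarith

variable {T₁ T₂ : E →L[𝕜] F}

theorem normAttainSubspace_le_of_forall_birkhoffJamesOrthogonal
    (h : ∀ S, BirkhoffJamesOrthogonal 𝕜 T₁ S → BirkhoffJamesOrthogonal 𝕜 T₂ S) :
    T₁.normAttainSubspace ≤ T₂.normAttainSubspace := by
  refine T₁.normAttainSubspace.forall_of_forall_norm_eq_one (zero_mem _)
    (fun c u ↦ Submodule.smul_mem _ c) fun u hu hu1 ↦ ?_
  have : Nontrivial E := nontrivial_of_ne u 0 (by rintro rfl; simp at hu1)
  by_contra hu₂
  have hlt : ‖T₂ u‖ < ‖T₂‖ := by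
    refine lt_of_le_of_ne (by simpa [hu1] using T₂.le_opNorm u) fun heq ↦ hu₂ ?_
    rw [mem_normAttainSubspace, heq, hu1, mul_one]
  have hBu : (T₂ - (innerSL 𝕜 u).smulRight (T₂ u)) u = 0 := by
    simp [inner_self_eq_norm_sq_to_K, hu1]
  obtain ⟨x, hx, hx1, hre⟩ := (h _ (birkhoffJamesOrthogonal_of_inner_map_eq_zero hu hu1
    (by rw [hBu, inner_zero_right]))).exists_re_inner_map_nonpos
  exact (re_inner_map_sub_smulRight_pos hu1 hlt hx hx1).not_ge hre

theorem map_mem_span_singleton_of_forall_birkhoffJamesOrthogonal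
    (h : ∀ S, BirkhoffJamesOrthogonal 𝕜 T₁ S → BirkhoffJamesOrthogonal 𝕜 T₂ S) :
    ∀ u ∈ T₁.normAttainSubspace, T₂ u ∈ 𝕜 ∙ T₁ u := by
  simp_rw [Submodule.mem_span_singleton]
  refine T₁.normAttainSubspace.forall_of_forall_norm_eq_one ⟨0, by simp⟩
    (fun c u ⟨a, ha⟩ ↦ ⟨a, by rw [map_smul, map_smul, smul_comm, ha]⟩) fun u hu hu1 ↦ ?_
  rw [← Submodule.mem_span_singleton, ← Submodule.orthogonal_orthogonal (𝕜 ∙ T₁ u),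
    Submodule.mem_orthogonal]
  intro w hw
  rw [Submodule.mem_orthogonal_singleton_iff_inner_right] at hw
  rw [inner_eq_zero_symm]
  by_contra hs
  have : Nontrivial E := nontrivial_of_ne u 0 (by rintro rfl; simp at hu1)
  set w' := (⟪T₂ u, w⟫_𝕜)⁻¹ • w
  have hw'₂ : ⟪T₂ u, w'⟫_𝕜 = 1 := by rw [inner_smul_right, inv_mul_cancel₀ hs]
  have hBu : ((innerSL 𝕜 u).smulRight w' + ((1 + ‖w'‖ ^ 2 : ℝ) : 𝕜) •
      (T₂ - (innerSL 𝕜 u).smulRight (T₂ u))) u = w' := by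
    simp [inner_self_eq_norm_sq_to_K, hu1]
  obtain ⟨x, hx, hx1, hre⟩ := (h _ (birkhoffJamesOrthogonal_of_inner_map_eq_zero hu hu1
    (by rw [hBu, inner_smul_right, hw, mul_zero]))).exists_re_inner_map_nonpos
  have hu₂ := normAttainSubspace_le_of_forall_birkhoffJamesOrthogonal h hu
  exact (re_inner_map_smulRight_add_pos hu₂ hu1 hw'₂ hx hx1).not_ge hre

theorem exists_eq_smul_of_forall_birkhoffJamesOrthogonal (hT₁ : T₁ ≠ 0) (hT₂ : T₂ ≠ 0)
    (h : ∀ S, BirkhoffJamesOrthogonal 𝕜 T₁ S → BirkhoffJamesOrthogonal 𝕜 T₂ S) :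
    ∃ α : 𝕜, α ≠ 0 ∧ ∀ u ∈ T₁.normAttainSubspace, T₁ u = α • T₂ u := by
  let M := T₁.normAttainSubspace
  have hinj : Function.Injective (T₁.toLinearMap ∘ₗ M.subtype) := by
    rw [← LinearMap.ker_eq_bot, LinearMap.ker_eq_bot']
    rintro ⟨u, hu⟩ h0
    have : ‖T₁‖ * ‖u‖ = 0 := by
      rw [← mem_normAttainSubspace.1 hu]
      simpa using h0
    simpa [norm_ne_zero_iff.2 hT₁] using this
  obtain ⟨β, hβ⟩ := LinearMap.exists_eq_smul_of_forall_mem_span_singleton hinj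
    (g := T₂.toLinearMap ∘ₗ M.subtype) fun u ↦
      map_mem_span_singleton_of_forall_birkhoffJamesOrthogonal h u u.2
  have hβu : ∀ u ∈ M, T₂ u = β • T₁ u := fun u hu ↦ LinearMap.congr_fun hβ ⟨u, hu⟩
  obtain ⟨x, hx⟩ : ∃ x, T₁ x ≠ 0 := by
    by_contra! h0
    exact hT₁ (ext h0)
  have : Nontrivial E := nontrivial_of_ne x 0 (by rintro rfl; simp at hx)
  obtain ⟨u₀, hu₀1, hu₀⟩ := T₁.exists_norm_eq_one_norm_map_eq_opNorm
  have hu₀M : u₀ ∈ M := by rw [mem_normAttainSubspace, hu₀, hu₀1, mul_one]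
  have hβ0 : β ≠ 0 := by
    rintro rfl
    have := normAttainSubspace_le_of_forall_birkhoffJamesOrthogonal h hu₀M
    rw [mem_normAttainSubspace, hβu u₀ hu₀M, zero_smul, norm_zero, hu₀1, mul_one] at this
    exact hT₂ (norm_eq_zero.1 this.symm)
  refine ⟨β⁻¹, inv_ne_zero hβ0, fun u hu ↦ ?_⟩
  rw [hβu u hu, smul_smul, inv_mul_cancel₀ hβ0, one_smul]

theorem _root_.BirkhoffJamesOrthogonal.of_normAttainSubspace_le {S : E →L[𝕜] F}
    (hM : T₁.normAttainSubspace ≤ T₂.normAttainSubspace) {α : 𝕜}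
    (hα : ∀ u ∈ T₁.normAttainSubspace, T₁ u = α • T₂ u) (hα0 : α ≠ 0)
    (h : BirkhoffJamesOrthogonal 𝕜 T₁ S) : BirkhoffJamesOrthogonal 𝕜 T₂ S := by
  rcases subsingleton_or_nontrivial E with hE | hE
  · intro c
    simp [Subsingleton.elim T₂ 0]
  intro c
  obtain ⟨u, hu, hu1, hre⟩ := (h.smul_right (-c / conj α)).exists_re_inner_map_nonpos
  refine norm_le_norm_add_of_re_inner_map_nonneg (hM hu) hu1 ?_
  have key : ⟪T₁ u, ((-c / conj α) • S) u⟫_𝕜 = -⟪T₂ u, (c • S) u⟫_𝕜 := by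
    rw [hα u hu, smul_apply, smul_apply, inner_smul_left, inner_smul_right, inner_smul_right]
    field_simp [(map_ne_zero _).2 hα0]
  rw [key, map_neg] at hre
  linarith

end ContinuousLinearMap

end InnerProductSpace

open Matrix in
theorem BJ_iff_birkhoffJamesOrthogonal {n : ℕ} (A B : Matrix (Fin n) (Fin n) ℂ) :
    BJ A B ↔ BirkhoffJamesOrthogonal ℂ (toEuclideanCLM (𝕜 := ℂ) A) (toEuclideanCLM (𝕜 := ℂ) B) := by
  simp only [BJ, BirkhoffJamesOrthogonal, ← map_smul, ← map_add, l2_opNorm_toEuclideanCLM]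

theorem M₀_eq_normAttainSubspace {n : ℕ} (A : Matrix (Fin n) (Fin n) ℂ) :
    M₀ A = (Matrix.toEuclideanCLM (𝕜 := ℂ) A).normAttainSubspace :=
  rfl

theorem orthSet_subset_orthSet_iff {n : ℕ} (A₁ A₂ : Matrix (Fin n) (Fin n) ℂ) :
    orthSet A₁ ⊆ orthSet A₂ ↔ ∀ S, BirkhoffJamesOrthogonal ℂ (Matrix.toEuclideanCLM (𝕜 := ℂ) A₁) S →
      BirkhoffJamesOrthogonal ℂ (Matrix.toEuclideanCLM (𝕜 := ℂ) A₂) S := by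
  refine ⟨fun h S hS ↦ ?_, fun h B hB ↦ (BJ_iff_birkhoffJamesOrthogonal _ _).2
    (h _ ((BJ_iff_birkhoffJamesOrthogonal _ _).1 hB))⟩
  obtain ⟨B, rfl⟩ := Matrix.toEuclideanCLM.surjective S
  exact (BJ_iff_birkhoffJamesOrthogonal _ _).1 (h ((BJ_iff_birkhoffJamesOrthogonal _ _).2 hS))

theorem orthSet_subset_iff {n : ℕ} (A₁ A₂ : Matrix (Fin n) (Fin n) ℂ)
    (h₁ : A₁ ≠ 0) (h₂ : A₂ ≠ 0) :
    orthSet A₁ ⊆ orthSet A₂ ↔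
      (M₀ A₁ ⊆ M₀ A₂ ∧ ∃ α : ℂ, α ≠ 0 ∧ ∀ u ∈ M₀ A₁, mulE A₁ u = α • mulE A₂ u) := by
  have hT : ∀ {A : Matrix (Fin n) (Fin n) ℂ}, A ≠ 0 → Matrix.toEuclideanCLM (𝕜 := ℂ) A ≠ 0 :=
    fun hA ↦ (map_ne_zero_iff _ Matrix.toEuclideanCLM.injective).2 hA
  rw [orthSet_subset_orthSet_iff, M₀_eq_normAttainSubspace, M₀_eq_normAttainSubspace,
    SetLike.coe_subset_coe]
  constructor
  · intro h
    exact ⟨ContinuousLinearMap.normAttainSubspace_le_of_forall_birkhoffJamesOrthogonal h,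
      ContinuousLinearMap.exists_eq_smul_of_forall_birkhoffJamesOrthogonal (hT h₁) (hT h₂) h⟩
  · rintro ⟨hM, α, hα0, hα⟩ S hS
    exact hS.of_normAttainSubspace_le hM hα hα0
end

section
/- Let A₁, …, A_m ∈ M_n(ℂ) be nonzero matrices with strictly increasing Birkhoff–James outgoing neighborhoods: A₁^⊥ ⊊ A₂^⊥ ⊊ ⋯ ⊊ A_m^⊥. Then m ≤ n. -/
open scoped Matrix.Norms.L2Operator Matrix

section Aux
variable {n : ℕ}

local notation "⟪" x ", " y "⟫" => @inner ℂ _ _ x y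

lemma mulE_addM (A B : Matrix (Fin n) (Fin n) ℂ) (u : EuclideanSpace ℂ (Fin n)) :
    mulE (A + B) u = mulE A u + mulE B u := by
  simp [mulE, map_add]

lemma mulE_smulM (c : ℂ) (A : Matrix (Fin n) (Fin n) ℂ) (u : EuclideanSpace ℂ (Fin n)) :
    mulE (c • A) u = c • mulE A u := by
  simp [mulE, map_smul]

lemma mulE_addV (A : Matrix (Fin n) (Fin n) ℂ) (u v : EuclideanSpace ℂ (Fin n)) :
    mulE A (u + v) = mulE A u + mulE A v := by
  simp [mulE, map_add]

lemma mulE_smulV (A : Matrix (Fin n) (Fin n) ℂ) (c : ℂ) (u : EuclideanSpace ℂ (Fin n)) :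
    mulE A (c • u) = c • mulE A u := by
  simp [mulE, map_smul]

lemma norm_mulE_le (A : Matrix (Fin n) (Fin n) ℂ) (u : EuclideanSpace ℂ (Fin n)) :
    ‖mulE A u‖ ≤ ‖A‖ * ‖u‖ := by
  rw [Matrix.cstar_norm_def]
  exact (Matrix.toEuclideanCLM (𝕜 := ℂ) A).le_opNorm u

lemma npos_of_ne_zero {A : Matrix (Fin n) (Fin n) ℂ} (hA : A ≠ 0) : 0 < n := by
  rcases Nat.eq_zero_or_pos n with h | h
  · subst h
    exact absurd (by ext i j; exact i.elim0) hA
  · exact h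

lemma exists_attain (hn : 0 < n) (A : Matrix (Fin n) (Fin n) ℂ) :
    ∃ u : EuclideanSpace ℂ (Fin n), ‖u‖ = 1 ∧ ‖mulE A u‖ = ‖A‖ := by
  have hS : IsCompact (Metric.sphere (0 : EuclideanSpace ℂ (Fin n)) 1) := isCompact_sphere _ _
  have hne : (Metric.sphere (0 : EuclideanSpace ℂ (Fin n)) 1).Nonempty := by
    have : Nontrivial (EuclideanSpace ℂ (Fin n)) := by
      have : 0 < Module.finrank ℂ (EuclideanSpace ℂ (Fin n)) := by
        simpa using hn
      exact Module.nontrivial_of_finrank_pos this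
    exact NormedSpace.sphere_nonempty.2 zero_le_one
  have hcont : Continuous fun u : EuclideanSpace ℂ (Fin n) => ‖mulE A u‖ := by
    exact (Matrix.toEuclideanCLM (𝕜 := ℂ) A).continuous.norm
  obtain ⟨u, huS, hmax⟩ := hS.exists_isMaxOn hne hcont.continuousOn
  have hu1 : ‖u‖ = 1 := by simpa using huS
  refine ⟨u, hu1, le_antisymm ?_ ?_⟩
  · simpa [hu1] using norm_mulE_le A u
  · rw [Matrix.cstar_norm_def]
    refine ContinuousLinearMap.opNorm_le_bound _ (norm_nonneg _) fun x => ?_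
    rcases eq_or_ne x 0 with rfl | hx
    · simp
    · have hxn : (‖x‖ : ℂ) ≠ 0 := by
        simpa using norm_ne_zero_iff.2 hx
      have hmem : (‖x‖⁻¹ : ℂ) • x ∈ Metric.sphere (0 : EuclideanSpace ℂ (Fin n)) 1 := by
        simp [norm_smul, norm_ne_zero_iff.2 hx]
      have := hmax hmem
      have h1 : ‖mulE A ((‖x‖⁻¹ : ℂ) • x)‖ ≤ ‖mulE A u‖ := this
      rw [mulE_smulV, norm_smul] at h1
      have h2 : ‖(‖x‖⁻¹ : ℂ)‖ = ‖x‖⁻¹ := by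
        simp [norm_ne_zero_iff.2 hx]
      rw [h2] at h1
      have hx0 : (0:ℝ) < ‖x‖ := norm_pos_iff.2 hx
      calc ‖mulE A x‖ = ‖x‖ * (‖x‖⁻¹ * ‖mulE A x‖) := by field_simp
        _ ≤ ‖x‖ * ‖mulE A u‖ := by nlinarith
        _ = ‖mulE A u‖ * ‖x‖ := by ring
end Aux

section Aux2
variable {n : ℕ}
local notation "⟪" x ", " y "⟫" => @inner ℂ _ _ x y

lemma lemmaC {B D : Matrix (Fin n) (Fin n) ℂ} (hB : B ≠ 0)
    (hBJ : ∀ c : ℂ, ‖B‖ ≤ ‖B + c • D‖) :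
    ∃ z : EuclideanSpace ℂ (Fin n), ‖z‖ = 1 ∧ ‖mulE B z‖ = ‖B‖ ∧
      0 ≤ (⟪mulE B z, mulE D z⟫).re := by
  have hn : 0 < n := npos_of_ne_zero hB
  set t : ℕ → ℝ := fun k => 1 / (k + 1) with ht
  have ht0 : ∀ k, 0 < t k := fun k => by positivity
  have htlim : Filter.Tendsto t Filter.atTop (nhds 0) :=
    tendsto_one_div_add_atTop_nhds_zero_nat
  choose z hz1 hzat using fun k => exists_attain hn (B + (t k : ℂ) • D)
  -- key inequalities along the sequence
  have hineq1 : ∀ k, ‖B‖ - t k * ‖D‖ ≤ ‖mulE B (z k)‖ := by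
    intro k
    have h1 : ‖B‖ ≤ ‖mulE B (z k) + (t k : ℂ) • mulE D (z k)‖ := by
      rw [← mulE_smulM, ← mulE_addM, hzat k]
      exact hBJ _
    have h2 : ‖mulE B (z k) + (t k : ℂ) • mulE D (z k)‖ ≤
        ‖mulE B (z k)‖ + t k * ‖D‖ := by
      refine (norm_add_le _ _).trans ?_
      gcongr
      rw [norm_smul]
      have : ‖(t k : ℂ)‖ = t k := by
        simp [Complex.norm_real, abs_of_pos (ht0 k)]
      rw [this]
      have := norm_mulE_le D (z k)
      rw [hz1 k, mul_one] at this
      have h3 : 0 ≤ t k := (ht0 k).le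
      nlinarith
    linarith
  have hineq2 : ∀ k, -(t k * ‖D‖ ^ 2) / 2 ≤ (⟪mulE B (z k), mulE D (z k)⟫).re := by
    intro k
    have h1 : ‖B‖ ≤ ‖mulE B (z k) + (t k : ℂ) • mulE D (z k)‖ := by
      rw [← mulE_smulM, ← mulE_addM, hzat k]
      exact hBJ _
    have hBz : ‖mulE B (z k)‖ ≤ ‖B‖ := by
      have := norm_mulE_le B (z k); rwa [hz1 k, mul_one] at this
    have hDz : ‖mulE D (z k)‖ ≤ ‖D‖ := by
      have := norm_mulE_le D (z k); rwa [hz1 k, mul_one] at this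
    have hsq : ‖mulE B (z k) + (t k : ℂ) • mulE D (z k)‖ ^ 2 =
        ‖mulE B (z k)‖ ^ 2 + 2 * (t k * (⟪mulE B (z k), mulE D (z k)⟫).re)
          + ‖(t k : ℂ) • mulE D (z k)‖ ^ 2 := by
      rw [norm_add_sq (𝕜 := ℂ)]
      congr 2
      rw [inner_smul_right]
      simp [Complex.re_ofReal_mul]
    have hnn : ‖B‖ ^ 2 ≤ ‖mulE B (z k) + (t k : ℂ) • mulE D (z k)‖ ^ 2 := by
      have := norm_nonneg B; nlinarith
    have hsm : ‖(t k : ℂ) • mulE D (z k)‖ ≤ t k * ‖D‖ := by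
      rw [norm_smul]
      have : ‖(t k : ℂ)‖ = t k := by
        simp [Complex.norm_real, abs_of_pos (ht0 k)]
      rw [this]
      have h3 : 0 ≤ t k := (ht0 k).le
      nlinarith
    have h4 : 0 ≤ t k := (ht0 k).le
    have h5 : 0 ≤ ‖(t k : ℂ) • mulE D (z k)‖ := norm_nonneg _
    have h6 : 0 ≤ t k * ‖D‖ := by positivity
    have hts : 0 < t k := ht0 k
    nlinarith [hsq, hnn, hBz, norm_nonneg (mulE B (z k))]
  -- pass to a convergent subsequence
  have hS : IsCompact (Metric.sphere (0 : EuclideanSpace ℂ (Fin n)) 1) := isCompact_sphere _ _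
  have hmem : ∀ k, z k ∈ Metric.sphere (0 : EuclideanSpace ℂ (Fin n)) 1 := by
    intro k; simpa using hz1 k
  obtain ⟨zs, hzsS, φ, hφ, hconv⟩ := hS.tendsto_subseq hmem
  have hzs1 : ‖zs‖ = 1 := by simpa using hzsS
  have htφ : Filter.Tendsto (fun k => t (φ k)) Filter.atTop (nhds 0) :=
    htlim.comp hφ.tendsto_atTop
  have hcont1 : Continuous fun u : EuclideanSpace ℂ (Fin n) => ‖mulE B u‖ :=
    (Matrix.toEuclideanCLM (𝕜 := ℂ) B).continuous.norm
  have hcont2 : Continuous fun u : EuclideanSpace ℂ (Fin n) =>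
      (⟪mulE B u, mulE D u⟫).re :=
    Complex.continuous_re.comp (Continuous.inner (Matrix.toEuclideanCLM (𝕜 := ℂ) B).continuous
      (Matrix.toEuclideanCLM (𝕜 := ℂ) D).continuous)
  have hlim1 : Filter.Tendsto (fun k => ‖mulE B (z (φ k))‖) Filter.atTop
      (nhds ‖mulE B zs‖) := (hcont1.tendsto zs).comp hconv
  have hlim2 : Filter.Tendsto (fun k => (⟪mulE B (z (φ k)), mulE D (z (φ k))⟫).re)
      Filter.atTop (nhds ((⟪mulE B zs, mulE D zs⟫).re)) := (hcont2.tendsto zs).comp hconv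
  refine ⟨zs, hzs1, le_antisymm ?_ ?_, ?_⟩
  · have := norm_mulE_le B zs; rwa [hzs1, mul_one] at this
  · have hlo : Filter.Tendsto (fun k => ‖B‖ - t (φ k) * ‖D‖) Filter.atTop (nhds ‖B‖) := by
      have := (htφ.mul_const ‖D‖)
      simpa using (tendsto_const_nhds (x := ‖B‖)).sub this
    exact le_of_tendsto_of_tendsto' hlo hlim1 fun k => hineq1 (φ k)
  · have hlo : Filter.Tendsto (fun k => -(t (φ k) * ‖D‖ ^ 2) / 2) Filter.atTop (nhds 0) := by
      have := ((htφ.mul_const (‖D‖ ^ 2)).neg).div_const 2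
      simpa using this
    exact le_of_tendsto_of_tendsto' hlo hlim2 fun k => hineq2 (φ k)

end Aux2

section Aux3
variable {n : ℕ}
local notation "⟪" x ", " y "⟫" => @inner ℂ _ _ x y

lemma mulE_subV (A : Matrix (Fin n) (Fin n) ℂ) (u v : EuclideanSpace ℂ (Fin n)) :
    mulE A (u - v) = mulE A u - mulE A v := by
  simp [mulE, map_sub]

lemma bj_smul {B D : Matrix (Fin n) (Fin n) ℂ} (a : ℂ) (h : BJ B D) : BJ B (a • D) := by
  intro c
  have := h (c * a)
  rwa [← smul_smul] at this

/-- The easy direction of Bhatia–Šemrl. -/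
lemma bj_of_attain {A C : Matrix (Fin n) (Fin n) ℂ} (y : EuclideanSpace ℂ (Fin n))
    (hy : ‖y‖ = 1) (hAy : ‖mulE A y‖ = ‖A‖) (h0 : ⟪mulE A y, mulE C y⟫ = 0) :
    BJ A C := by
  intro c
  have hle : ‖mulE (A + c • C) y‖ ≤ ‖A + c • C‖ := by
    have := norm_mulE_le (A + c • C) y; rwa [hy, mul_one] at this
  refine le_trans ?_ hle
  rw [mulE_addM, mulE_smulM]
  have hsq : ‖mulE A y + c • mulE C y‖ ^ 2 =
      ‖mulE A y‖ ^ 2 + 2 * (⟪mulE A y, c • mulE C y⟫).re + ‖c • mulE C y‖ ^ 2 := by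
    exact_mod_cast norm_add_sq (𝕜 := ℂ) _ _
  rw [inner_smul_right, h0, mul_zero] at hsq
  simp only [Complex.zero_re] at hsq
  have h1 : ‖mulE A y‖ ^ 2 ≤ ‖mulE A y + c • mulE C y‖ ^ 2 := by nlinarith [sq_nonneg ‖c • mulE C y‖]
  rw [← hAy]
  have := norm_nonneg (mulE A y + c • mulE C y)
  nlinarith

/-- The norm-attaining set as a submodule (via the parallelogram law). -/
noncomputable def attainSub (A : Matrix (Fin n) (Fin n) ℂ) :
    Submodule ℂ (EuclideanSpace ℂ (Fin n)) where
  carrier := M₀ A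
  zero_mem' := by simp [M₀, mulE, map_zero]
  smul_mem' := by
    intro c x hx
    simp only [M₀, Set.mem_setOf_eq] at hx ⊢
    rw [mulE_smulV, norm_smul, norm_smul, hx]
    ring
  add_mem' := by
    intro x y hx hy
    simp only [M₀, Set.mem_setOf_eq] at hx hy ⊢
    have par1 : ‖mulE A x + mulE A y‖ ^ 2 + ‖mulE A x - mulE A y‖ ^ 2 =
        2 * (‖mulE A x‖ ^ 2 + ‖mulE A y‖ ^ 2) := by
      have := parallelogram_law_with_norm ℂ (mulE A x) (mulE A y)
      nlinarith [this]
    have par2 : ‖x + y‖ ^ 2 + ‖x - y‖ ^ 2 = 2 * (‖x‖ ^ 2 + ‖y‖ ^ 2) := by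
      have := parallelogram_law_with_norm ℂ x y
      nlinarith [this]
    have ha : ‖mulE A (x + y)‖ ≤ ‖A‖ * ‖x + y‖ := norm_mulE_le A _
    have hb : ‖mulE A (x - y)‖ ≤ ‖A‖ * ‖x - y‖ := norm_mulE_le A _
    rw [mulE_addV] at ha ⊢
    rw [mulE_subV] at hb
    have hA0 : 0 ≤ ‖A‖ := norm_nonneg A
    have h1 : 0 ≤ ‖x + y‖ := norm_nonneg _
    have h2 : 0 ≤ ‖x - y‖ := norm_nonneg _
    have h3 : 0 ≤ ‖mulE A x + mulE A y‖ := norm_nonneg _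
    refine le_antisymm ha ?_
    have hb2 : ‖mulE A x - mulE A y‖ ^ 2 ≤ (‖A‖ * ‖x - y‖) ^ 2 := by
      nlinarith [norm_nonneg (mulE A x - mulE A y)]
    rw [hx, hy] at par1
    have par2c : ‖A‖ ^ 2 * (‖x + y‖ ^ 2 + ‖x - y‖ ^ 2) = ‖A‖ ^ 2 * (2 * (‖x‖ ^ 2 + ‖y‖ ^ 2)) := by
      rw [par2]
    have ha2 : (‖A‖ * ‖x + y‖) ^ 2 ≤ ‖mulE A x + mulE A y‖ ^ 2 := by nlinarith
    exact le_of_pow_le_pow_left₀ two_ne_zero h3 ha2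

lemma mem_attainSub_iff {A : Matrix (Fin n) (Fin n) ℂ} {x : EuclideanSpace ℂ (Fin n)} :
    x ∈ attainSub A ↔ ‖mulE A x‖ = ‖A‖ * ‖x‖ := Iff.rfl

end Aux3

section Aux4
variable {n : ℕ}
local notation "⟪" x ", " y "⟫" => @inner ℂ _ _ x y

lemma mulE_subM (A B : Matrix (Fin n) (Fin n) ℂ) (u : EuclideanSpace ℂ (Fin n)) :
    mulE (A - B) u = mulE A u - mulE B u := by
  simp [mulE, map_sub]

lemma key1 {A B : Matrix (Fin n) (Fin n) ℂ} (hA : A ≠ 0) (hB : B ≠ 0)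
    (hsub : orthSet A ⊆ orthSet B) {y : EuclideanSpace ℂ (Fin n)}
    (hy1 : ‖y‖ = 1) (hyA : ‖mulE A y‖ = ‖A‖) :
    ‖A‖ * ‖B‖ ≤ ‖⟪mulE A y, mulE B y⟫‖ := by
  by_contra hlt
  push_neg at hlt
  have hApos : 0 < ‖A‖ := norm_pos_iff.2 hA
  have hBpos : 0 < ‖B‖ := norm_pos_iff.2 hB
  set μ : ℂ := ⟪mulE A y, mulE B y⟫ / ((‖A‖ : ℂ)) ^ 2 with hμdef
  have hμnorm : ‖μ‖ < ‖B‖ / ‖A‖ := by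
    rw [hμdef, norm_div]
    have h1 : ‖((‖A‖ : ℂ)) ^ 2‖ = ‖A‖ ^ 2 := by
      rw [norm_pow, Complex.norm_real, Real.norm_eq_abs, abs_of_pos hApos]
    rw [h1, div_lt_div_iff₀ (by positivity) hApos]
    nlinarith
  set C : Matrix (Fin n) (Fin n) ℂ := μ • A - B with hCdef
  have hCA : BJ A C := by
    apply bj_of_attain y hy1 hyA
    rw [hCdef, mulE_subM, mulE_smulM, inner_sub_right, inner_smul_right,
      inner_self_eq_norm_sq_to_K, hyA]
    have hd : ((‖A‖ : ℂ)) ^ 2 ≠ 0 :=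
      pow_ne_zero _ (Complex.ofReal_ne_zero.2 hApos.ne')
    rw [hμdef]
    field_simp
    simp [hA, hApos.ne']
  have hCB : BJ B C := hsub hCA
  obtain ⟨z, hz1, hzB, hre⟩ := lemmaC hB hCB
  have hCz : mulE C z = μ • mulE A z - mulE B z := by
    rw [hCdef, mulE_subM, mulE_smulM]
  rw [hCz, inner_sub_right, inner_smul_right] at hre
  have hAz : ‖mulE A z‖ ≤ ‖A‖ := by
    have := norm_mulE_le A z; rwa [hz1, mul_one] at this
  have h2 : (μ * ⟪mulE B z, mulE A z⟫).re ≤ ‖μ‖ * (‖B‖ * ‖A‖) := by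
    calc (μ * ⟪mulE B z, mulE A z⟫).re ≤ ‖μ * ⟪mulE B z, mulE A z⟫‖ :=
          Complex.re_le_norm _
      _ = ‖μ‖ * ‖⟪mulE B z, mulE A z⟫‖ := by rw [norm_mul]
      _ ≤ ‖μ‖ * (‖B‖ * ‖A‖) := by
          have h5 : ‖⟪mulE B z, mulE A z⟫‖ ≤ ‖B‖ * ‖A‖ :=
            calc ‖⟪mulE B z, mulE A z⟫‖ ≤ ‖mulE B z‖ * ‖mulE A z‖ :=
                  norm_inner_le_norm _ _
              _ ≤ ‖B‖ * ‖A‖ := by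
                  rw [hzB]; exact mul_le_mul_of_nonneg_left hAz hBpos.le
          exact mul_le_mul_of_nonneg_left h5 (norm_nonneg μ)
  have h3 : (⟪mulE B z, mulE B z⟫ : ℂ).re = ‖B‖ ^ 2 := by
    rw [inner_self_eq_norm_sq_to_K, hzB]
    norm_cast
  have h4 : ‖μ‖ * (‖B‖ * ‖A‖) < ‖B‖ ^ 2 := by
    calc ‖μ‖ * (‖B‖ * ‖A‖) < ‖B‖ / ‖A‖ * (‖B‖ * ‖A‖) := by
          apply mul_lt_mul_of_pos_right hμnorm; positivity
      _ = ‖B‖ ^ 2 := by field_simp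
  rw [Complex.sub_re] at hre
  linarith

lemma key2 {A B : Matrix (Fin n) (Fin n) ℂ} (hA : A ≠ 0) (hB : B ≠ 0)
    (hsub : orthSet A ⊆ orthSet B) {y : EuclideanSpace ℂ (Fin n)}
    (hy1 : ‖y‖ = 1) (hyA : ‖mulE A y‖ = ‖A‖) :
    ‖mulE B y‖ = ‖B‖ ∧ ∃ r : ℂ, r ≠ 0 ∧ mulE B y = r • mulE A y := by
  have hApos : 0 < ‖A‖ := norm_pos_iff.2 hA
  have hBpos : 0 < ‖B‖ := norm_pos_iff.2 hB
  have hk := key1 hA hB hsub hy1 hyA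
  have hcs : ‖⟪mulE A y, mulE B y⟫‖ ≤ ‖mulE A y‖ * ‖mulE B y‖ := norm_inner_le_norm _ _
  have hBy_le : ‖mulE B y‖ ≤ ‖B‖ := by
    have := norm_mulE_le B y; rwa [hy1, mul_one] at this
  have h6 : ‖A‖ * ‖B‖ ≤ ‖A‖ * ‖mulE B y‖ := le_trans hk (by rw [← hyA]; exact hcs)
  have hByB : ‖mulE B y‖ = ‖B‖ :=
    le_antisymm hBy_le (le_of_mul_le_mul_left h6 hApos)
  refine ⟨hByB, ?_⟩
  have heq : ‖⟪mulE A y, mulE B y⟫‖ = ‖mulE A y‖ * ‖mulE B y‖ :=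
    le_antisymm hcs (by rw [hyA, hByB]; exact hk)
  have hAy0 : mulE A y ≠ 0 := by
    intro h; rw [h, norm_zero] at hyA; exact hApos.ne hyA
  have hBy0 : mulE B y ≠ 0 := by
    intro h; rw [h, norm_zero] at hByB; exact hBpos.ne hByB
  exact (norm_inner_eq_norm_iff hAy0 hBy0).1 heq

lemma attain_le {A B : Matrix (Fin n) (Fin n) ℂ} (hA : A ≠ 0) (hB : B ≠ 0)
    (hsub : orthSet A ⊆ orthSet B) : attainSub A ≤ attainSub B := by
  intro x hx
  rcases eq_or_ne x 0 with rfl | hx0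
  · exact zero_mem _
  have hxpos : 0 < ‖x‖ := norm_pos_iff.2 hx0
  have hxC : ((‖x‖ : ℂ)) ≠ 0 := Complex.ofReal_ne_zero.2 hxpos.ne'
  set y : EuclideanSpace ℂ (Fin n) := (‖x‖⁻¹ : ℂ) • x with hydef
  have hy1 : ‖y‖ = 1 := by
    rw [hydef, norm_smul]
    simp [hxpos.ne']
  have hyA : ‖mulE A y‖ = ‖A‖ := by
    rw [hydef, mulE_smulV, norm_smul, mem_attainSub_iff.1 hx]
    simp [hxpos.ne']
    field_simp
  obtain ⟨hyB, -⟩ := key2 hA hB hsub hy1 hyA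
  have hymem : y ∈ attainSub B := by
    rw [mem_attainSub_iff, hy1, mul_one]; exact hyB
  have hsm := Submodule.smul_mem (attainSub B) ((‖x‖ : ℂ)) hymem
  have hxy : ((‖x‖ : ℂ)) • y = x := by
    rw [hydef, smul_smul, mul_inv_cancel₀ hxC, one_smul]
  rwa [hxy] at hsm

lemma attain_inj {A : Matrix (Fin n) (Fin n) ℂ} (hA : A ≠ 0)
    {w : EuclideanSpace ℂ (Fin n)} (hw : w ∈ attainSub A) (h0 : mulE A w = 0) :
    w = 0 := by
  have hApos : 0 < ‖A‖ := norm_pos_iff.2 hA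
  have := mem_attainSub_iff.1 hw
  rw [h0, norm_zero] at this
  have : ‖w‖ = 0 := by
    rcases mul_eq_zero.1 this.symm with h | h
    · exact absurd h hApos.ne'
    · exact h
  simpa using norm_eq_zero.1 this

lemma pointwise_prop {A B : Matrix (Fin n) (Fin n) ℂ} (hA : A ≠ 0) (hB : B ≠ 0)
    (hsub : orthSet A ⊆ orthSet B) {z : EuclideanSpace ℂ (Fin n)}
    (hz : z ∈ attainSub A) (hz0 : z ≠ 0) :
    ∃ r : ℂ, r ≠ 0 ∧ mulE B z = r • mulE A z := by
  have hxpos : 0 < ‖z‖ := norm_pos_iff.2 hz0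
  have hxC : ((‖z‖ : ℂ)) ≠ 0 := Complex.ofReal_ne_zero.2 hxpos.ne'
  set y : EuclideanSpace ℂ (Fin n) := (‖z‖⁻¹ : ℂ) • z with hydef
  have hy1 : ‖y‖ = 1 := by rw [hydef, norm_smul]; simp [hxpos.ne']
  have hyA : ‖mulE A y‖ = ‖A‖ := by
    rw [hydef, mulE_smulV, norm_smul, mem_attainSub_iff.1 hz]
    simp [hxpos.ne']
    field_simp
  obtain ⟨-, r, hr0, hr⟩ := key2 hA hB hsub hy1 hyA
  refine ⟨r, hr0, ?_⟩
  have hxy : ((‖z‖ : ℂ)) • y = z := by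
    rw [hydef, smul_smul, mul_inv_cancel₀ hxC, one_smul]
  have e1 : mulE B y = ((‖z‖ : ℂ))⁻¹ • mulE B z := by rw [hydef, mulE_smulV]
  have e2 : mulE A y = ((‖z‖ : ℂ))⁻¹ • mulE A z := by rw [hydef, mulE_smulV]
  rw [e1, e2, smul_comm r] at hr
  exact smul_right_injective (EuclideanSpace ℂ (Fin n)) (inv_ne_zero hxC) hr

lemma gamma_const {A B : Matrix (Fin n) (Fin n) ℂ} (hA : A ≠ 0) (hB : B ≠ 0)
    (hsub : orthSet A ⊆ orthSet B) :
    ∃ γ : ℂ, γ ≠ 0 ∧ ∀ z ∈ attainSub A, mulE B z = γ • mulE A z := by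
  obtain ⟨y₀, hy₀1, hy₀A⟩ := exists_attain (npos_of_ne_zero hA) A
  have hy₀mem : y₀ ∈ attainSub A := by
    rw [mem_attainSub_iff, hy₀1, mul_one]; exact hy₀A
  have hy₀0 : y₀ ≠ 0 := by
    intro h; rw [h, norm_zero] at hy₀1; norm_num at hy₀1
  have hAy₀0 : mulE A y₀ ≠ 0 := fun h => hy₀0 (attain_inj hA hy₀mem h)
  obtain ⟨γ, hγ0, hγ⟩ := pointwise_prop hA hB hsub hy₀mem hy₀0
  refine ⟨γ, hγ0, ?_⟩
  intro z hz
  rcases eq_or_ne z 0 with rfl | hz0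
  · simp [mulE, map_zero]
  obtain ⟨r, hr0, hr⟩ := pointwise_prop hA hB hsub hz hz0
  by_cases hdep : ∃ c : ℂ, z = c • y₀
  · obtain ⟨c, rfl⟩ := hdep
    have hc0 : c ≠ 0 := by rintro rfl; simp at hz0
    have h1 : mulE B (c • y₀) = γ • mulE A (c • y₀) := by
      rw [mulE_smulV, hγ, mulE_smulV, smul_comm]
    exact h1
  · have hw : z + y₀ ∈ attainSub A := add_mem hz hy₀mem
    have hw0 : z + y₀ ≠ 0 := by
      intro h
      exact hdep ⟨-1, by rw [neg_smul, one_smul]; exact eq_neg_of_add_eq_zero_left h⟩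
    obtain ⟨s, hs0, hs⟩ := pointwise_prop hA hB hsub hw hw0
    rw [mulE_addV, mulE_addV, hγ, hr] at hs
    -- hs : r • mulE A z + γ • mulE A y₀ = s • (mulE A z + mulE A y₀)
    have h3 : (s - r) • mulE A z = (γ - s) • mulE A y₀ := by
      rw [smul_add] at hs
      rw [sub_smul, sub_smul, sub_eq_sub_iff_add_eq_add, ← hs]
      exact add_comm _ _
    have hsr : s = r := by
      by_contra hne
      have hd : (s - r) ≠ 0 := sub_ne_zero.2 hne
      set c : ℂ := (s - r)⁻¹ * (γ - s) with hcdef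
      have hAzc : mulE A z = c • mulE A y₀ := by
        calc mulE A z = (s - r)⁻¹ • ((s - r) • mulE A z) := by
              rw [smul_smul, inv_mul_cancel₀ hd, one_smul]
          _ = (s - r)⁻¹ • ((γ - s) • mulE A y₀) := by rw [h3]
          _ = c • mulE A y₀ := by rw [smul_smul]
      have hz' : z - c • y₀ ∈ attainSub A :=
        sub_mem hz (Submodule.smul_mem _ _ hy₀mem)
      have h0 : mulE A (z - c • y₀) = 0 := by
        rw [mulE_subV, mulE_smulV, hAzc, sub_self]
      have := attain_inj hA hz' h0
      exact hdep ⟨c, sub_eq_zero.1 this⟩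
    have hγs : γ = s := by
      have h4 : (γ - s) • mulE A y₀ = 0 := by
        rw [← h3, hsr, sub_self, zero_smul]
      rcases smul_eq_zero.1 h4 with h | h
      · exact sub_eq_zero.1 h
      · exact absurd h hAy₀0
    rw [hr, hγs.trans hsr]

lemma orth_rev {A B : Matrix (Fin n) (Fin n) ℂ} (hA : A ≠ 0) (hB : B ≠ 0)
    (hsub : orthSet A ⊆ orthSet B) (heq : attainSub A = attainSub B) :
    orthSet B ⊆ orthSet A := by
  obtain ⟨γ, hγ0, hγ⟩ := gamma_const hA hB hsub
  intro D hD
  intro c₀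
  have hBJ2 : BJ B ((γ * c₀) • D) := bj_smul _ hD
  obtain ⟨z, hz1, hzB, hre⟩ := lemmaC hB hBJ2
  have hzA : z ∈ attainSub A := by
    rw [heq, mem_attainSub_iff, hz1, mul_one]; exact hzB
  have hAz : ‖mulE A z‖ = ‖A‖ := by
    have := mem_attainSub_iff.1 hzA; rwa [hz1, mul_one] at this
  have hBz : mulE B z = γ • mulE A z := hγ z hzA
  rw [mulE_smulM, hBz, inner_smul_left, inner_smul_right] at hre
  have hns : (starRingEnd ℂ) γ * (γ * c₀ * ⟪mulE A z, mulE D z⟫) =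
      ((Complex.normSq γ : ℝ) : ℂ) * (c₀ * ⟪mulE A z, mulE D z⟫) := by
    rw [show (starRingEnd ℂ) γ * (γ * c₀ * ⟪mulE A z, mulE D z⟫) =
      (γ * (starRingEnd ℂ) γ) * (c₀ * ⟪mulE A z, mulE D z⟫) from by ring, Complex.mul_conj]
  rw [hns, Complex.re_ofReal_mul] at hre
  have hnsq : 0 < Complex.normSq γ := Complex.normSq_pos.2 hγ0
  have hkey : 0 ≤ (c₀ * ⟪mulE A z, mulE D z⟫).re := nonneg_of_mul_nonneg_right hre hnsq
  have hle : ‖mulE (A + c₀ • D) z‖ ≤ ‖A + c₀ • D‖ := by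
    have := norm_mulE_le (A + c₀ • D) z; rwa [hz1, mul_one] at this
  refine le_trans ?_ hle
  rw [mulE_addM, mulE_smulM]
  have hsq : ‖mulE A z + c₀ • mulE D z‖ ^ 2 =
      ‖mulE A z‖ ^ 2 + 2 * (⟪mulE A z, c₀ • mulE D z⟫).re + ‖c₀ • mulE D z‖ ^ 2 := by
    exact_mod_cast norm_add_sq (𝕜 := ℂ) _ _
  rw [inner_smul_right] at hsq
  have h5 : ‖A‖ ^ 2 ≤ ‖mulE A z + c₀ • mulE D z‖ ^ 2 := by
    rw [hsq, hAz]
    nlinarith [sq_nonneg ‖c₀ • mulE D z‖]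
  exact le_of_pow_le_pow_left₀ two_ne_zero (norm_nonneg _) h5
end Aux4


theorem chain_length_le {n m : ℕ} (A : Fin m → Matrix (Fin n) (Fin n) ℂ)
    (hA : ∀ i, A i ≠ 0)
    (hchain : ∀ i j : Fin m, i < j → orthSet (A i) ⊂ orthSet (A j)) :
    m ≤ n := by
  rcases Nat.eq_zero_or_pos m with rfl | hm
  · exact Nat.zero_le n
  have hmono : ∀ i j : Fin m, i < j → attainSub (A i) < attainSub (A j) := by
    intro i j hij
    have hss := hchain i j hij
    have hle := attain_le (hA i) (hA j) hss.subset
    refine lt_of_le_of_ne hle fun heq => ?_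
    exact (HasSSubset.SSubset.not_subset hss) (orth_rev (hA i) (hA j) hss.subset heq)
  set r : Fin m → ℕ := fun i => Module.finrank ℂ (attainSub (A i)) with hrdef
  have hrlt : ∀ i j : Fin m, i < j → r i < r j := fun i j hij =>
    Submodule.finrank_lt_finrank_of_lt (hmono i j hij)
  have hpos : ∀ i : Fin m, 1 ≤ r i := by
    intro i
    obtain ⟨u, hu1, huA⟩ := exists_attain (npos_of_ne_zero (hA i)) (A i)
    have humem : u ∈ attainSub (A i) := by
      rw [mem_attainSub_iff, hu1, mul_one]; exact huA
    have hu0 : u ≠ 0 := fun h => by rw [h, norm_zero] at hu1; norm_num at hu1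
    have hnt : Nontrivial (attainSub (A i)) :=
      ⟨⟨u, humem⟩, 0, fun h => hu0 (by simpa using congrArg Subtype.val h)⟩
    exact Module.finrank_pos_iff (R := ℂ) (M := attainSub (A i)) |>.2 hnt
  have hstep : ∀ k : ℕ, ∀ hk : k < m, k + 1 ≤ r ⟨k, hk⟩ := by
    intro k
    induction k with
    | zero => intro hk; exact hpos _
    | succ k ih =>
      intro hk
      have hk' : k < m := Nat.lt_of_succ_lt hk
      have h1 := hrlt ⟨k, hk'⟩ ⟨k + 1, hk⟩ (Fin.mk_lt_mk.2 (Nat.lt_succ_self k))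
      have h2 := ih hk'
      omega
  have hlast := hstep (m - 1) (by omega)
  have hub : r ⟨m - 1, by omega⟩ ≤ n := by
    have h1 : r ⟨m - 1, by omega⟩ ≤ Module.finrank ℂ (EuclideanSpace ℂ (Fin n)) :=
      Submodule.finrank_le _
    rwa [finrank_euclideanSpace_fin] at h1
  omega
end

section
/- If A ∈ M_n(ℂ) is a nonzero scalar multiple of a unitary matrix and B ∈ M_n(ℂ) satisfies B ⊥ A, then A ⊥ B. -/
/-!
Multiplying by `Uᴴ` and rescaling reduces the claim to `A = 1`. If `‖1 + λ B‖ < 1`, put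
`T = λ B` and `δ = 1 - ‖1 + T‖ > 0`. Then `Re ⟪T v, v⟫ ≤ -δ ‖v‖²` for every vector `v`, so
`‖(T + δ) v‖² ≤ (‖T‖² - δ²) ‖v‖²`; hence `‖B + (δ / λ) 1‖ < ‖B‖`, and `B` is not orthogonal
to `1`.
-/

open scoped Matrix.Norms.L2Operator Matrix

namespace ContinuousLinearMap

variable {E : Type*} [NormedAddCommGroup E] [InnerProductSpace ℂ E]

lemma reApplyInnerSelf_le (T : E →L[ℂ] E) (v : E) :
    T.reApplyInnerSelf v ≤ (‖1 + T‖ - 1) * ‖v‖ ^ 2 := by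
  have hsplit : (1 + T).reApplyInnerSelf v = ‖v‖ ^ 2 + T.reApplyInnerSelf v := by
    simp [reApplyInnerSelf_apply, inner_add_left, ← Complex.ofReal_pow]
  have hbound : (1 + T).reApplyInnerSelf v ≤ ‖1 + T‖ * ‖v‖ ^ 2 :=
    calc (1 + T).reApplyInnerSelf v ≤ ‖(1 + T) v‖ * ‖v‖ := re_inner_le_norm _ _
      _ ≤ ‖1 + T‖ * ‖v‖ * ‖v‖ := by gcongr; exact le_opNorm _ _
      _ = ‖1 + T‖ * ‖v‖ ^ 2 := by ring
  linarith

lemma norm_add_ofReal_smul_one_apply_sq (T : E →L[ℂ] E) (s : ℝ) (v : E) :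
    ‖(T + (s : ℂ) • 1) v‖ ^ 2 = ‖T v‖ ^ 2 + 2 * s * T.reApplyInnerSelf v + s ^ 2 * ‖v‖ ^ 2 := by
  rw [add_apply, smul_apply, one_apply_eq_self, norm_add_sq (𝕜 := ℂ), inner_smul_right, norm_smul,
    reApplyInnerSelf_apply]
  simp only [RCLike.re_to_complex, Complex.re_ofReal_mul, Complex.norm_real, Real.norm_eq_abs,
    mul_pow, sq_abs]
  ring

lemma norm_add_ofReal_smul_one_le_sqrt (T : E →L[ℂ] E) {δ : ℝ} (hδ : 0 ≤ δ)
    (hδT : δ ≤ 1 - ‖1 + T‖) : ‖T + (δ : ℂ) • 1‖ ≤ √(‖T‖ ^ 2 - δ ^ 2) := by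
  refine opNorm_le_bound _ (Real.sqrt_nonneg _) fun v => ?_
  have hTv : ‖T v‖ ^ 2 ≤ ‖T‖ ^ 2 * ‖v‖ ^ 2 := by
    rw [← mul_pow]; gcongr; exact le_opNorm T v
  have hre : δ * T.reApplyInnerSelf v ≤ -δ ^ 2 * ‖v‖ ^ 2 := by
    calc δ * T.reApplyInnerSelf v ≤ δ * ((‖1 + T‖ - 1) * ‖v‖ ^ 2) := by
          gcongr; exact T.reApplyInnerSelf_le v
      _ ≤ δ * (-δ * ‖v‖ ^ 2) := by gcongr; linarith
      _ = -δ ^ 2 * ‖v‖ ^ 2 := by ring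
  have hsq : ‖(T + (δ : ℂ) • 1) v‖ ^ 2 ≤ (‖T‖ ^ 2 - δ ^ 2) * ‖v‖ ^ 2 := by
    rw [norm_add_ofReal_smul_one_apply_sq]
    nlinarith
  calc ‖(T + (δ : ℂ) • 1) v‖ ≤ √((‖T‖ ^ 2 - δ ^ 2) * ‖v‖ ^ 2) := Real.le_sqrt_of_sq_le hsq
    _ = √(‖T‖ ^ 2 - δ ^ 2) * ‖v‖ := by
      rw [Real.sqrt_mul' _ (sq_nonneg _), Real.sqrt_sq (norm_nonneg _)]

lemma norm_add_ofReal_smul_one_lt [Nontrivial E] {T : E →L[ℂ] E} (h : ‖1 + T‖ < 1) :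
    ‖T + ((1 - ‖1 + T‖ : ℝ) : ℂ) • 1‖ < ‖T‖ := by
  set δ := 1 - ‖1 + T‖
  have hδ : 0 < δ := by linarith
  have hT : 0 < ‖T‖ := by
    refine norm_pos_iff.mpr fun hT0 => ?_
    rw [hT0, add_zero, norm_one] at h
    exact lt_irrefl _ h
  calc _ ≤ √(‖T‖ ^ 2 - δ ^ 2) := norm_add_ofReal_smul_one_le_sqrt T hδ.le le_rfl
    _ < ‖T‖ := (Real.sqrt_lt' hT).mpr (by nlinarith)

theorem norm_one_le_norm_one_add_smul {B : E →L[ℂ] E} (hB : ∀ μ : ℂ, ‖B‖ ≤ ‖B + μ • 1‖)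
    (l : ℂ) : ‖(1 : E →L[ℂ] E)‖ ≤ ‖1 + l • B‖ := by
  by_contra! h
  have : Nontrivial E := by
    by_contra hE
    rw [not_nontrivial_iff_subsingleton] at hE
    rw [Subsingleton.elim (1 : E →L[ℂ] E) 0, norm_zero] at h
    exact (norm_nonneg _).not_gt h
  rw [norm_one] at h
  have hl : l ≠ 0 := by rintro rfl; simp at h
  set δ : ℂ := ((1 - ‖1 + l • B‖ : ℝ) : ℂ)
  have hshift : l • B + δ • 1 = l • (B + (δ / l) • 1) := by
    rw [smul_add, smul_smul, mul_div_cancel₀ _ hl]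
  have hlt := norm_add_ofReal_smul_one_lt h
  rw [hshift, norm_smul, norm_smul] at hlt
  exact (lt_of_mul_lt_mul_left hlt (norm_nonneg l)).not_ge (hB _)

end ContinuousLinearMap

namespace BJ

variable {n : ℕ} {X Y : Matrix (Fin n) (Fin n) ℂ}

lemma smul_left (h : BJ X Y) (c : ℂ) : BJ (c • X) Y := by
  intro μ
  rcases eq_or_ne c 0 with rfl | hc
  · simp
  calc ‖c • X‖ = ‖c‖ * ‖X‖ := norm_smul c X
    _ ≤ ‖c‖ * ‖X + (μ / c) • Y‖ := by gcongr; exact h _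
    _ = ‖c • X + μ • Y‖ := by rw [← norm_smul, smul_add, smul_smul, mul_div_cancel₀ _ hc]

lemma of_smul_right {c : ℂ} (hc : c ≠ 0) (h : BJ X (c • Y)) : BJ X Y := fun μ => by
  simpa [smul_smul, div_mul_cancel₀ _ hc] using h (μ / c)

lemma mul_left_of_mem_unitary (h : BJ X Y) {U : Matrix (Fin n) (Fin n) ℂ}
    (hU : U ∈ unitary _) : BJ (U * X) (U * Y) := fun μ => by
  rw [← Matrix.mul_smul, ← Matrix.mul_add, CStarRing.norm_mem_unitary_mul _ hU,
    CStarRing.norm_mem_unitary_mul _ hU]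
  exact h μ

lemma one_left_of_one_right (h : BJ X 1) : BJ 1 X := fun l => by
  have hX (μ : ℂ) : ‖Matrix.toEuclideanCLM (𝕜 := ℂ) X‖ ≤
      ‖Matrix.toEuclideanCLM (𝕜 := ℂ) X + μ • 1‖ := by
    simpa only [Matrix.cstar_norm_def, map_add, map_smul, map_one] using h μ
  simpa only [Matrix.cstar_norm_def, map_add, map_smul, map_one] using
    ContinuousLinearMap.norm_one_le_norm_one_add_smul hX l

end BJ

theorem scalar_unitary_right_symmetric {n : ℕ} (A B : Matrix (Fin n) (Fin n) ℂ)
    (c : ℂ) (U : Matrix (Fin n) (Fin n) ℂ) (hc : c ≠ 0) (hU : Uᴴ * U = 1) (hA : A = c • U)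
    (hBA : BJ B A) : BJ A B := by
  have hUu : U ∈ unitary _ := Matrix.mem_unitaryGroup_iff'.mpr hU
  have hBU : BJ (Uᴴ * B) 1 := by
    have := (BJ.of_smul_right hc (hA ▸ hBA)).mul_left_of_mem_unitary (Unitary.star_mem hUu)
    rwa [Matrix.star_eq_conjTranspose, hU] at this
  have hUB := hBU.one_left_of_one_right.mul_left_of_mem_unitary hUu
  rw [mul_one, ← Matrix.mul_assoc, ← Matrix.star_eq_conjTranspose,
    Unitary.mul_star_self_of_mem hUu, one_mul] at hUB
  exact hA ▸ hUB.smul_left c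
end

section
/- Let A ∈ M_n(ℂ) and let u be a unit vector with ‖Au‖ = ‖A‖. If the linear functional F(B) = (Au)*Bu on M_n(ℂ) satisfies ker F ⊆ A₂^⊥ for some A₂ ∈ M_n(ℂ), then |(Au)*A₂u| = ‖Au‖·‖A₂‖; consequently u ∈ M₀(A₂). -/
open scoped Matrix.Norms.L2Operator Matrix

lemma mulE_bound {n : ℕ} (A : Matrix (Fin n) (Fin n) ℂ) (u : EuclideanSpace ℂ (Fin n)) :
    ‖mulE A u‖ ≤ ‖A‖ * ‖u‖ := by
  rw [Matrix.cstar_norm_def]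
  exact (Matrix.toEuclideanCLM (𝕜 := ℂ) A).le_opNorm u

lemma mulE_sub {n : ℕ} (A B : Matrix (Fin n) (Fin n) ℂ) (u : EuclideanSpace ℂ (Fin n)) :
    mulE (A - B) u = mulE A u - mulE B u := by
  simp [mulE, map_sub]

lemma mulE_smul {n : ℕ} (c : ℂ) (A : Matrix (Fin n) (Fin n) ℂ) (u : EuclideanSpace ℂ (Fin n)) :
    mulE (c • A) u = c • mulE A u := by
  simp [mulE, map_smul]

lemma mulE_vecMulVec {n : ℕ} (v u w : EuclideanSpace ℂ (Fin n)) :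
    mulE (Matrix.vecMulVec (WithLp.equiv 2 _ v) (star (WithLp.equiv 2 _ u))) w
      = (inner (𝕜 := ℂ) u w) • v := by
  apply (WithLp.equiv 2 (Fin n → ℂ)).injective
  rw [mulE]; simp only [WithLp.equiv_apply, Matrix.ofLp_toEuclideanCLM]
  ext i
  simp [Matrix.mulVec, dotProduct, Matrix.vecMulVec_apply, PiLp.inner_apply,
    Finset.mul_sum, mul_comm, mul_left_comm]

theorem ker_subset_orth_implies {n : ℕ} (A A₂ : Matrix (Fin n) (Fin n) ℂ)
    (u : EuclideanSpace ℂ (Fin n)) (hu : ‖u‖ = 1) (hAu : ‖mulE A u‖ = ‖A‖)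
    (hker : {B : Matrix (Fin n) (Fin n) ℂ |
        inner (𝕜 := ℂ) (mulE A u) (mulE B u) = 0} ⊆ orthSet A₂) :
    ‖(inner (𝕜 := ℂ) (mulE A u) (mulE A₂ u) : ℂ)‖ = ‖mulE A u‖ * ‖A₂‖ ∧ u ∈ M₀ A₂ := by
  set v := mulE A u with hv
  by_cases hv0 : v = 0
  · have hmem : (-A₂) ∈ {B : Matrix (Fin n) (Fin n) ℂ |
        inner (𝕜 := ℂ) (mulE A u) (mulE B u) = 0} := by
      simp [Set.mem_setOf_eq, ← hv, hv0]
    have h1 := hker hmem (1 : ℂ)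
    simp only [one_smul, add_neg_cancel, norm_zero] at h1
    have hA2 : ‖A₂‖ = 0 := le_antisymm h1 (norm_nonneg _)
    constructor
    · simp [hv0, hA2]
    · have hle := mulE_bound A₂ u
      rw [hA2, zero_mul] at hle
      simp only [M₀, Set.mem_setOf_eq, hA2, zero_mul]
      exact le_antisymm hle (norm_nonneg _)
  · have hvpos : 0 < ‖v‖ := norm_pos_iff.mpr hv0
    set α : ℂ := inner (𝕜 := ℂ) v (mulE A₂ u) with hα
    set c : ℂ := α / ((‖v‖ : ℂ) ^ 2) with hc
    set P : Matrix (Fin n) (Fin n) ℂ :=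
      Matrix.vecMulVec (WithLp.equiv 2 _ v) (star (WithLp.equiv 2 _ u)) with hP
    have hPu : mulE P u = v := by
      rw [hP, mulE_vecMulVec]
      have : (inner (𝕜 := ℂ) u u : ℂ) = 1 := by
        rw [inner_self_eq_norm_sq_to_K, hu]; norm_num
      rw [this, one_smul]
    have hPnorm : ‖P‖ ≤ ‖v‖ := by
      rw [Matrix.cstar_norm_def]
      refine ContinuousLinearMap.opNorm_le_bound _ (norm_nonneg v) fun w => ?_
      have : Matrix.toEuclideanCLM (𝕜 := ℂ) P w = (inner (𝕜 := ℂ) u w) • v := by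
        rw [← mulE, hP, mulE_vecMulVec]
      rw [this, norm_smul]
      calc ‖(inner (𝕜 := ℂ) u w : ℂ)‖ * ‖v‖ ≤ ‖u‖ * ‖w‖ * ‖v‖ := by
            gcongr; exact norm_inner_le_norm u w
        _ = ‖v‖ * ‖w‖ := by rw [hu]; ring
    have hker' : inner (𝕜 := ℂ) v (mulE (A₂ - c • P) u) = 0 := by
      rw [mulE_sub, mulE_smul, hPu, inner_sub_right, inner_smul_right, ← hα]
      have hne : ((‖v‖ : ℂ)) ≠ 0 := by exact_mod_cast hvpos.ne'
      have h3 : (inner (𝕜 := ℂ) v v : ℂ) = (‖v‖ : ℂ) ^ 2 := by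
        rw [inner_self_eq_norm_sq_to_K]; norm_num
      rw [h3, hc, div_mul_cancel₀ _ (pow_ne_zero 2 hne), sub_self]
    have hB := hker hker' (-1 : ℂ)
    have heq : A₂ + (-1 : ℂ) • (A₂ - c • P) = c • P := by
      simp [smul_sub]
    rw [heq, norm_smul] at hB
    have hcnorm : ‖c‖ = ‖α‖ / ‖v‖ ^ 2 := by
      rw [hc, norm_div, norm_pow, Complex.norm_real, Real.norm_eq_abs, abs_of_pos hvpos]
    have hupper : ‖v‖ * ‖A₂‖ ≤ ‖α‖ := by
      have h2 : ‖A₂‖ ≤ (‖α‖ / ‖v‖ ^ 2) * ‖v‖ := by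
        calc ‖A₂‖ ≤ ‖c‖ * ‖P‖ := hB
          _ ≤ ‖c‖ * ‖v‖ := by gcongr
          _ = (‖α‖ / ‖v‖ ^ 2) * ‖v‖ := by rw [hcnorm]
      have := mul_le_mul_of_nonneg_left h2 (le_of_lt hvpos)
      calc ‖v‖ * ‖A₂‖ ≤ ‖v‖ * ((‖α‖ / ‖v‖ ^ 2) * ‖v‖) := this
        _ = ‖α‖ := by field_simp
    have hlow1 : ‖α‖ ≤ ‖v‖ * ‖mulE A₂ u‖ := norm_inner_le_norm v (mulE A₂ u)
    have hbd : ‖mulE A₂ u‖ ≤ ‖A₂‖ := by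
      have := mulE_bound A₂ u; rwa [hu, mul_one] at this
    have hM : ‖mulE A₂ u‖ = ‖A₂‖ := by
      refine le_antisymm hbd ?_
      have : ‖v‖ * ‖A₂‖ ≤ ‖v‖ * ‖mulE A₂ u‖ := le_trans hupper hlow1
      exact le_of_mul_le_mul_left this hvpos
    refine ⟨le_antisymm ?_ hupper, ?_⟩
    · calc ‖α‖ ≤ ‖v‖ * ‖mulE A₂ u‖ := hlow1
        _ = ‖v‖ * ‖A₂‖ := by rw [hM]
    · simp only [M₀, Set.mem_setOf_eq, hu, mul_one]; exact hM
end

section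
/- Let P_k ∈ M_N(ℂ) denote the orthogonal projection onto the span of the first k standard basis vectors, 1 ≤ k ≤ N. Then for each k < N, P_k ∈ P_{k+1}^⊥ but P_k ∉ P_k^⊥; hence the outgoing Birkhoff–James neighborhoods P_1^⊥ ⊊ P_2^⊥ ⊊ ⋯ ⊊ P_N^⊥ form a chain of length N. -/
open scoped Matrix.Norms.L2Operator Matrix

/-- `Pk N k` is the orthogonal projection onto the span of the first `k+1`
standard basis vectors of `ℂ^N`. -/
noncomputable def Pk (N : ℕ) (k : Fin N) : Matrix (Fin N) (Fin N) ℂ :=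
  Matrix.diagonal (fun i => if (i : ℕ) ≤ (k : ℕ) then 1 else 0)

/-!
Linear combinations of the `P_k` are diagonal, and the operator norm of a diagonal matrix is
the sup norm of its diagonal: hence `‖P_k‖ = 1`, and `‖P_j + c P_i‖ ≥ 1` for `i < j` from the `j`-th entry.
For monotonicity, if `i ≤ j` then `2 P_i - P_j` has diagonal entries in `{1, -1, 0}`, and
`2 (P_i + (c/2) B) = (P_j + c B) + (2 P_i - P_j)` shows that `‖P_j + c B‖ < 1` would force
`‖P_i + (c/2) B‖ < 1`.
-/

theorem norm_le_norm_add_smul_of_forall_norm_le {𝕜 E : Type*} [RCLike 𝕜]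
    [SeminormedAddCommGroup E] [NormedSpace 𝕜 E] {x y b : E}
    (hxy : ‖y‖ + ‖(2 : 𝕜) • x - y‖ ≤ 2 * ‖x‖) (hx : ∀ c : 𝕜, ‖x‖ ≤ ‖x + c • b‖) (c : 𝕜) :
    ‖y‖ ≤ ‖y + c • b‖ := by
  have hsplit : (2 : 𝕜) • (x + (c / 2) • b) = (y + c • b) + ((2 : 𝕜) • x - y) := by
    rw [smul_add, smul_smul, mul_div_cancel₀ c two_ne_zero]
    abel
  have hmid : 2 * ‖x + (c / 2) • b‖ ≤ ‖y + c • b‖ + ‖(2 : 𝕜) • x - y‖ :=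
    calc 2 * ‖x + (c / 2) • b‖ = ‖(2 : 𝕜) • (x + (c / 2) • b)‖ := by
          rw [norm_smul, RCLike.norm_ofNat]
      _ ≤ ‖y + c • b‖ + ‖(2 : 𝕜) • x - y‖ := hsplit ▸ norm_add_le _ _
  linarith [hx (c / 2)]

section Projections

variable {N : ℕ}

theorem norm_Pk (k : Fin N) : ‖Pk N k‖ = 1 := by
  rw [Pk, Matrix.l2_opNorm_diagonal]
  refine le_antisymm ((pi_norm_le_iff_of_nonneg zero_le_one).2 fun l => ?_) ?_
  · split_ifs <;> simp
  · simpa using norm_le_pi_norm (fun l : Fin N => if (l : ℕ) ≤ k then (1 : ℂ) else 0) k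

theorem Pk_mem_orthSet_of_lt {i j : Fin N} (hij : i < j) : Pk N i ∈ orthSet (Pk N j) := by
  intro c
  rw [norm_Pk, Pk, Pk, ← Matrix.diagonal_smul, Matrix.diagonal_add,
    Matrix.l2_opNorm_diagonal]
  refine le_trans ?_ (norm_le_pi_norm _ j)
  simp [not_le.2 hij]

theorem Pk_not_mem_orthSet_self (k : Fin N) : Pk N k ∉ orthSet (Pk N k) := by
  intro h
  have h1 := h (-1)
  norm_num [norm_Pk] at h1

theorem norm_two_smul_Pk_sub_Pk_le {i j : Fin N} (hij : i ≤ j) :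
    ‖(2 : ℂ) • Pk N i - Pk N j‖ ≤ 1 := by
  rw [Pk, Pk, ← Matrix.diagonal_smul, Matrix.diagonal_sub, Matrix.l2_opNorm_diagonal]
  refine (pi_norm_le_iff_of_nonneg zero_le_one).2 fun l => ?_
  by_cases hli : l ≤ i
  · norm_num [hli, hli.trans hij]
  · by_cases hlj : l ≤ j <;> simp [hli, hlj]

theorem orthSet_Pk_mono {i j : Fin N} (hij : i ≤ j) :
    orthSet (Pk N i) ⊆ orthSet (Pk N j) := fun _ hB =>
  norm_le_norm_add_smul_of_forall_norm_le
    (by linarith [norm_Pk i, norm_Pk j, norm_two_smul_Pk_sub_Pk_le hij]) hB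

end Projections

theorem projection_chain (N : ℕ) :
    (∀ i j : Fin N, (i : ℕ) + 1 = (j : ℕ) → Pk N i ∈ orthSet (Pk N j)) ∧
      (∀ k : Fin N, Pk N k ∉ orthSet (Pk N k)) ∧
      (∀ i j : Fin N, i < j → orthSet (Pk N i) ⊂ orthSet (Pk N j)) := by
  refine ⟨fun i j h => Pk_mem_orthSet_of_lt (Fin.lt_def.2 (by omega)),
    Pk_not_mem_orthSet_self, fun i j hij => ?_⟩
  exact (Set.ssubset_iff_of_subset (orthSet_Pk_mono hij.le)).2
    ⟨Pk N i, Pk_mem_orthSet_of_lt hij, Pk_not_mem_orthSet_self i⟩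
end
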